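/- arXiv:2008.13067 — 7 statements merged into one kernel-verified Lean document; each statement's English description precedes it below -/
import Mathlib

section
/- For every F ∈ ℝ^{3×3} and every U, V ∈ SO(3), the first moment of the (unnormalized) matrix Fisher density transforms equivariantly: ∫_{SO(3)} R · exp(tr((U F Vᵀ)ᵀ R)) dμ(R) = U · (∫_{SO(3)} Q · exp(tr(Fᵀ Q)) dμ(Q)) · Vᵀ. -/
/-!
Substituting `R = U Q Vᵀ` preserves `μ` by two-sided invariance, and since `U, V` are orthogonal
it turns the weight `exp tr((U F Vᵀ)ᵀ R)` into `exp tr(Fᵀ Q)`. The remaining factor `U Q Vᵀ` is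
linear in `Q`, so `U` and `Vᵀ` come out of the entrywise integral. Integrability is automatic:
`μ` is a finite measure carried by the compact set `SO3`.
-/

open MeasureTheory Matrix

noncomputable section

/-- The space of real `3 × 3` matrices. -/
abbrev M3 := Matrix (Fin 3) (Fin 3) ℝ

instance : MeasurableSpace M3 := (inferInstance : MeasurableSpace (Fin 3 → Fin 3 → ℝ))

/-- The special orthogonal group `SO(3)`: real `3 × 3` matrices `R` with
`Rᵀ R = 1` and `det R = 1`. -/
def SO3 : Set M3 := {R | Rᵀ * R = 1 ∧ R.det = 1}

/-- `μ` is the Haar probability measure of the compact group `SO(3)`, viewed as a measure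
on the ambient space of `3 × 3` matrices: it is a probability measure carried by `SO3`
which is invariant under left and right translation by elements of `SO3`. -/
structure IsHaarSO3 (μ : Measure M3) : Prop where
  prob : IsProbabilityMeasure μ
  carried : μ SO3ᶜ = 0
  map_left : ∀ U ∈ SO3, Measure.map (fun R => U * R) μ = μ
  map_right : ∀ V ∈ SO3, Measure.map (fun R => R * V) μ = μ

instance : BorelSpace M3 := (inferInstance : BorelSpace (Fin 3 → Fin 3 → ℝ))

theorem Matrix.trace_transpose_mul_orthogonal_conj {n α : Type*} [Fintype n] [DecidableEq n]
    [CommRing α] (F Q U V : Matrix n n α) (hU : Uᵀ * U = 1) (hV : Vᵀ * V = 1) :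
    ((U * F * Vᵀ)ᵀ * (U * Q * Vᵀ)).trace = (Fᵀ * Q).trace := by
  have hprod : (U * F * Vᵀ)ᵀ * (U * Q * Vᵀ) = V * (Fᵀ * Q * Vᵀ) := by
    simp only [transpose_mul, transpose_transpose, Matrix.mul_assoc]
    rw [← Matrix.mul_assoc Uᵀ, hU, Matrix.one_mul]
  rw [hprod, trace_mul_comm, Matrix.mul_assoc, hV, Matrix.mul_one]

theorem Matrix.integral_mul_mul_apply {X m n p q : Type*} [MeasurableSpace X] {μ : Measure X}
    [Fintype n] [Fintype p] (A : Matrix m n ℝ) (B : Matrix p q ℝ) {M : X → Matrix n p ℝ}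
    (hM : ∀ k l, Integrable (fun x => M x k l) μ) (i : m) (j : q) :
    ∫ x, (A * M x * B) i j ∂μ = (A * Matrix.of (fun k l => ∫ x, M x k l ∂μ) * B) i j := by
  simp only [mul_apply, of_apply, Finset.sum_mul]
  rw [integral_finsetSum _ fun l _ => integrable_finsetSum _ fun k _ =>
    ((hM k l).const_mul _).mul_const _]
  refine Finset.sum_congr rfl fun l _ => ?_
  rw [integral_finsetSum _ fun k _ => ((hM k l).const_mul _).mul_const _]
  refine Finset.sum_congr rfl fun k _ => ?_
  rw [integral_mul_const, integral_const_mul]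

theorem transpose_mem_SO3 {R : M3} (hR : R ∈ SO3) : Rᵀ ∈ SO3 :=
  ⟨by rw [transpose_transpose]; exact mul_eq_one_comm.mp hR.1, by rw [det_transpose]; exact hR.2⟩

theorem mem_unitaryGroup_of_mem_SO3 {R : M3} (hR : R ∈ SO3) : R ∈ unitaryGroup (Fin 3) ℝ := by
  rw [mem_unitaryGroup_iff', star_eq_conjTranspose, conjTranspose_eq_transpose_of_trivial]
  exact hR.1

theorem isCompact_SO3 : IsCompact SO3 := by
  have hclosed : IsClosed SO3 :=
    (isClosed_eq (by fun_prop) continuous_const).inter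
      (isClosed_eq continuous_id.matrix_det continuous_const)
  have hcube : IsCompact (Set.univ.pi fun _ : Fin 3 => Set.univ.pi fun _ : Fin 3 =>
      Set.Icc (-1 : ℝ) 1) :=
    isCompact_univ_pi fun _ => isCompact_univ_pi fun _ => isCompact_Icc
  refine hcube.of_isClosed_subset hclosed fun R hR i _ j _ => ?_
  have hentry := entry_norm_bound_of_unitary (mem_unitaryGroup_of_mem_SO3 hR) i j
  exact abs_le.mp (by simpa using hentry)

namespace IsHaarSO3

variable {μ : Measure M3}

theorem integrable_of_continuous (hμ : IsHaarSO3 μ) {E : Type*} [NormedAddCommGroup E]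
    {f : M3 → E} (hf : Continuous f) : Integrable f μ := by
  have := hμ.prob
  have hae : ∀ᵐ R ∂μ, R ∈ SO3 := ae_iff.mpr hμ.carried
  rw [← Measure.restrict_eq_self_of_ae_mem hae]
  exact hf.continuousOn.integrableOn_compact isCompact_SO3

theorem integral_comp_mul_mul (hμ : IsHaarSO3 μ) {U W : M3} (hU : U ∈ SO3) (hW : W ∈ SO3)
    {E : Type*} [NormedAddCommGroup E] [NormedSpace ℝ E] {g : M3 → E}
    (hg : AEStronglyMeasurable g μ) : ∫ Q, g (U * Q * W) ∂μ = ∫ R, g R ∂μ := by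
  have hmeas : Measurable fun Q : M3 => U * Q * W := by fun_prop
  have hmap : μ.map (fun Q => U * Q * W) = μ := by
    change μ.map ((fun Q => Q * W) ∘ fun Q => U * Q) = μ
    rw [← Measure.map_map (by fun_prop) (by fun_prop), hμ.map_left U hU, hμ.map_right W hW]
  calc ∫ Q, g (U * Q * W) ∂μ = ∫ R, g R ∂(μ.map fun Q => U * Q * W) :=
        (integral_map hmeas.aemeasurable (by rwa [hmap])).symm
    _ = ∫ R, g R ∂μ := by rw [hmap]

end IsHaarSO3

/-- **Equivariance of the first moment** of the unnormalized matrix Fisher density: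
`∫ R exp(tr((U F Vᵀ)ᵀ R)) dμ = U (∫ Q exp(tr(Fᵀ Q)) dμ) Vᵀ` for `U, V ∈ SO(3)`. -/
theorem first_moment_equivariant (μ : Measure M3) (hμ : IsHaarSO3 μ)
    (F U V : M3) (hU : U ∈ SO3) (hV : V ∈ SO3) :
    Matrix.of (fun i j => ∫ R, R i j * Real.exp (((U * F * Vᵀ)ᵀ * R).trace) ∂μ)
      = U * Matrix.of (fun i j => ∫ Q, Q i j * Real.exp ((Fᵀ * Q).trace) ∂μ) * Vᵀ := by
  ext i j
  have hweighted : ∀ k l, Integrable (fun Q : M3 => Q k l * Real.exp ((Fᵀ * Q).trace)) μ :=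
    fun k l => hμ.integrable_of_continuous (by fun_prop)
  calc ∫ R, R i j * Real.exp (((U * F * Vᵀ)ᵀ * R).trace) ∂μ
      = ∫ Q, (U * Q * Vᵀ) i j * Real.exp (((U * F * Vᵀ)ᵀ * (U * Q * Vᵀ)).trace) ∂μ :=
        (hμ.integral_comp_mul_mul hU (transpose_mem_SO3 hV)
          (Continuous.aestronglyMeasurable (by fun_prop))).symm
    _ = ∫ Q, (U * Matrix.of (fun k l => Q k l * Real.exp ((Fᵀ * Q).trace)) * Vᵀ) i j ∂μ := by
        congr 1 with Q
        rw [trace_transpose_mul_orthogonal_conj F Q U V hU.1 hV.1]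
        have hsmul : Matrix.of (fun k l => Q k l * Real.exp ((Fᵀ * Q).trace))
            = Real.exp ((Fᵀ * Q).trace) • Q := by
          ext k l
          exact mul_comm _ _
        rw [hsmul, Matrix.mul_smul, Matrix.smul_mul, Matrix.smul_apply, smul_eq_mul, mul_comm]
    _ = _ := integral_mul_mul_apply U Vᵀ hweighted i j
end
end

section
/- If S ∈ ℝ^{3×3} is a diagonal matrix, then the first moment ∫_{SO(3)} Q · exp(tr(S Q)) dμ(Q) is a diagonal matrix. -/
open MeasureTheory Matrix

noncomputable section

theorem MeasureTheory.integral_eq_zero_of_measurePreserving_of_comp_eq_neg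
    {α E : Type*} [MeasurableSpace α] [NormedAddCommGroup E] [NormedSpace ℝ E]
    {μ : Measure α} {T : α → α} {f : α → E} (hT : MeasurePreserving T μ μ)
    (hf : AEStronglyMeasurable f μ) (hfT : ∀ x, f (T x) = -f x) :
    ∫ x, f x ∂μ = 0 := by
  have : IsAddTorsionFree E := .of_isTorsionFree ℝ E
  have hinv := integral_map hT.measurable.aemeasurable (hT.map_eq.symm ▸ hf)
  rw [hT.map_eq] at hinv
  simp_rw [← self_eq_neg, ← integral_neg, ← hfT, hinv]

theorem Matrix.diagonal_mul_mul_diagonal_apply {n R : Type*} [Fintype n] [DecidableEq n]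
    [CommSemiring R] (d e : n → R) (Q : Matrix n n R) (k l : n) :
    (diagonal d * Q * diagonal e) k l = d k * e l * Q k l := by
  rw [mul_diagonal, diagonal_mul]
  ring

theorem IsHaarSO3.measurePreserving_mul_mul {μ : Measure M3} (hμ : IsHaarSO3 μ)
    {U V : M3} (hU : U ∈ SO3) (hV : V ∈ SO3) :
    MeasurePreserving (fun Q => U * Q * V) μ μ := by
  have hleft : MeasurePreserving (fun Q => U * Q) μ μ := ⟨by fun_prop, hμ.map_left U hU⟩
  have hright : MeasurePreserving (fun Q => Q * V) μ μ := ⟨by fun_prop, hμ.map_right V hV⟩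
  simpa only [Function.comp_def, mul_assoc] using hleft.comp hright

def signsAt (i : Fin 3) : Fin 3 → ℝ := fun k => if k = i then 1 else -1

theorem signsAt_mul_self (i k : Fin 3) : signsAt i k * signsAt i k = 1 := by
  unfold signsAt
  split_ifs <;> norm_num

theorem diagonal_signsAt_mem_SO3 (i : Fin 3) : diagonal (signsAt i) ∈ SO3 := by
  refine ⟨?_, ?_⟩
  · rw [diagonal_transpose, diagonal_mul_diagonal]
    simp only [signsAt_mul_self, diagonal_one]
  · rw [det_diagonal, Fin.prod_univ_three]
    fin_cases i <;> simp [signsAt]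

theorem integral_offDiag_mul_exp_trace_eq_zero {μ : Measure M3} (hμ : IsHaarSO3 μ)
    (s : Fin 3 → ℝ) {i j : Fin 3} (hij : i ≠ j) :
    ∫ Q, Q i j * Real.exp ((diagonal s * Q).trace) ∂μ = 0 := by
  have hD := diagonal_signsAt_mem_SO3 i
  refine integral_eq_zero_of_measurePreserving_of_comp_eq_neg
    (hμ.measurePreserving_mul_mul hD hD) (by fun_prop : Continuous _).aestronglyMeasurable
    fun Q => ?_
  have hentry : signsAt i i * signsAt i j = -1 := by simp [signsAt, hij.symm]
  simp only [trace, diag, diagonal_mul, diagonal_mul_mul_diagonal_apply, signsAt_mul_self,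
    one_mul, hentry]
  ring

/-- If `S` is diagonal then the first moment `∫ Q exp(tr(S Q)) dμ(Q)` is a diagonal
matrix. -/
theorem first_moment_diagonal (μ : Measure M3) (hμ : IsHaarSO3 μ) (s : Fin 3 → ℝ) :
    ∃ d : Fin 3 → ℝ,
      Matrix.of (fun i j => ∫ Q, Q i j * Real.exp ((Matrix.diagonal s * Q).trace) ∂μ)
        = Matrix.diagonal d := by
  refine ⟨_, ((isDiag_iff_diagonal_diag _).mp fun i j hij => ?_).symm⟩
  simpa using integral_offDiag_mul_exp_trace_eq_zero hμ s hij
end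
end

section
/- Let D = diag(d₁,d₂,d₃) be a real diagonal 3×3 matrix, let U, V ∈ SO(3), let a ∈ ℝ³ with ‖a‖ = 1, and let θ ∈ ℝ. Then tr((U exp(θ â) Vᵀ)ᵀ (U D Vᵀ)) = (d₁+d₂+d₃) − (1−cos θ)·[(d₂+d₃)a₁² + (d₃+d₁)a₂² + (d₁+d₂)a₃²], where exp denotes the matrix exponential. -/
open MeasureTheory Matrix

noncomputable section

/-- The hat map: `hat x` is the skew-symmetric `3 × 3` matrix with `(hat x) y = x × y`. -/
def hat (x : Fin 3 → ℝ) : M3 :=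
  !![0, -x 2, x 1; x 2, 0, -x 0; -x 1, x 0, 0]

/-!
For a unit vector `a` the matrix `â` satisfies `â³ = -â`, so the exponential series of `θ â`
splits into the sine and cosine series (Rodrigues' formula):
`exp (θ â) = 1 + sin θ â + (1 - cos θ) â²`. The pairing `tr (Xᵀ Y)` is invariant under
`X ↦ U X Vᵀ` for orthogonal `U`, `V`, which leaves `tr (exp (θ â)ᵀ D) = ∑ dᵢ exp (θ â)ᵢᵢ`,
and the diagonal of `â² = a aᵀ - 1` is `aᵢ² - 1`.
-/

open scoped Nat

section RodriguesFormula

variable {A : Type*} [Ring A] [Algebra ℝ A] {X : A}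

theorem pow_two_mul_add_one_of_pow_three_eq_neg (h : X ^ 3 = -X) (n : ℕ) :
    X ^ (2 * n + 1) = (-1 : ℝ) ^ n • X := by
  induction n with
  | zero => simp
  | succ n ih =>
    rw [show 2 * (n + 1) + 1 = 2 * n + 1 + 2 by ring, pow_add, ih, smul_mul_assoc, ← pow_succ',
      h, smul_neg, pow_succ, mul_neg_one, neg_smul]

theorem pow_two_mul_add_two_of_pow_three_eq_neg (h : X ^ 3 = -X) (n : ℕ) :
    X ^ (2 * n + 2) = (-1 : ℝ) ^ n • X ^ 2 := by
  rw [pow_succ, pow_two_mul_add_one_of_pow_three_eq_neg h, smul_mul_assoc, ← sq]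

variable [TopologicalSpace A] [IsTopologicalRing A] [T2Space A] [ContinuousSMul ℝ A]

theorem exp_smul_of_pow_three_eq_neg (h : X ^ 3 = -X) (θ : ℝ) :
    NormedSpace.exp (θ • X) = 1 + Real.sin θ • X + (1 - Real.cos θ) • X ^ 2 := by
  have hodd : HasSum (fun n ↦ ((2 * n + 1)! : ℝ)⁻¹ • (θ • X) ^ (2 * n + 1)) (Real.sin θ • X) :=
    (Real.hasSum_sin θ).smul_const X |>.congr_fun fun n ↦ by
      rw [smul_pow, pow_two_mul_add_one_of_pow_three_eq_neg h, smul_smul, smul_smul]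
      ring_nf
  have hcos : HasSum (fun n ↦ (-1) ^ n * θ ^ (2 * n + 2) / (2 * n + 2)! : ℕ → ℝ)
      (1 - Real.cos θ) := by
    have hshift := (hasSum_nat_add_iff (f := fun n ↦ (-1 : ℝ) ^ n * θ ^ (2 * n) / (2 * n)!)
      (g := Real.cos θ - 1) 1).mpr (by simpa using Real.hasSum_cos θ)
    rw [← neg_sub]
    refine hshift.neg.congr_fun fun n ↦ ?_
    simp only [pow_succ, mul_add_one]
    ring
  have heven : HasSum (fun n ↦ ((2 * n)! : ℝ)⁻¹ • (θ • X) ^ (2 * n))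
      (1 + (1 - Real.cos θ) • X ^ 2) := by
    simpa using HasSum.zero_add (f := fun n ↦ ((2 * n)! : ℝ)⁻¹ • (θ • X) ^ (2 * n))
      (hcos.smul_const (X ^ 2) |>.congr_fun fun n ↦ by
        rw [smul_pow, mul_add_one, pow_two_mul_add_two_of_pow_three_eq_neg h, smul_smul,
          smul_smul]
        ring_nf)
  rw [congrFun (NormedSpace.exp_eq_tsum ℝ (𝔸 := A)) (θ • X),
    (HasSum.even_add_odd (f := fun n ↦ (n ! : ℝ)⁻¹ • (θ • X) ^ n) heven hodd).tsum_eq]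
  abel

end RodriguesFormula

namespace Matrix

variable {n R : Type*} [Fintype n] [DecidableEq n] [CommRing R]

theorem trace_transpose_mul_eq_of_orthogonal {U V : Matrix n n R} (hU : Uᵀ * U = 1)
    (hV : Vᵀ * V = 1) (E F : Matrix n n R) :
    ((U * E * Vᵀ)ᵀ * (U * F * Vᵀ)).trace = (Eᵀ * F).trace := by
  calc ((U * E * Vᵀ)ᵀ * (U * F * Vᵀ)).trace
      = (V * (Eᵀ * ((Uᵀ * U) * F)) * Vᵀ).trace := by
        simp only [transpose_mul, transpose_transpose, Matrix.mul_assoc]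
    _ = (Vᵀ * V * (Eᵀ * F)).trace := by
        rw [hU, Matrix.one_mul, trace_mul_comm, Matrix.mul_assoc]
    _ = (Eᵀ * F).trace := by rw [hV, Matrix.one_mul]

theorem trace_transpose_mul_diagonal (E : Matrix n n R) (d : n → R) :
    (Eᵀ * diagonal d).trace = ∑ i, E i i * d i := by
  simp only [trace, diag_apply, mul_diagonal, transpose_apply]

end Matrix

theorem hat_mulVec (x y : Fin 3 → ℝ) : hat x *ᵥ y = x ⨯₃ y := by
  ext i
  fin_cases i <;>
    simp only [mulVec, dotProduct, hat, cross_apply, Fin.sum_univ_three, of_apply, cons_val',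
      cons_val_fin_one, cons_val_zero, cons_val_one, cons_val, Fin.isValue, Fin.zero_eta,
      Fin.mk_one, Fin.reduceFinMk] <;>
    ring

theorem hat_apply_self (x : Fin 3 → ℝ) (i : Fin 3) : hat x i i = 0 := by
  fin_cases i <;> simp [hat]

theorem hat_mul_hat (x : Fin 3 → ℝ) : hat x * hat x = vecMulVec x x - (x ⬝ᵥ x) • 1 := by
  refine mulVec_injective (funext fun y ↦ ?_)
  rw [← mulVec_mulVec, hat_mulVec, hat_mulVec, cross_cross_eq_smul_sub_smul', sub_mulVec,
    vecMulVec_mulVec, smul_mulVec, one_mulVec, op_smul_eq_smul]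

theorem hat_pow_three (x : Fin 3 → ℝ) : hat x ^ 3 = -(x ⬝ᵥ x) • hat x := by
  rw [pow_succ', sq, hat_mul_hat, Matrix.mul_sub, mul_vecMulVec, hat_mulVec, cross_self,
    mul_smul_comm, Matrix.mul_one]
  simp only [zero_vecMulVec, zero_sub, neg_smul]

theorem exp_smul_hat {a : Fin 3 → ℝ} (ha : a ⬝ᵥ a = 1) (θ : ℝ) :
    NormedSpace.exp (θ • hat a) = 1 + Real.sin θ • hat a + (1 - Real.cos θ) • hat a ^ 2 :=
  exp_smul_of_pow_three_eq_neg (by rw [hat_pow_three, ha, neg_one_smul]) θ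

theorem exp_smul_hat_apply_self {a : Fin 3 → ℝ} (ha : a ⬝ᵥ a = 1) (θ : ℝ) (i : Fin 3) :
    NormedSpace.exp (θ • hat a) i i = 1 - (1 - Real.cos θ) * (1 - a i ^ 2) := by
  simp only [exp_smul_hat ha, sq, hat_mul_hat, ha, one_smul, Matrix.add_apply, one_apply_eq,
    Matrix.smul_apply, hat_apply_self, smul_eq_mul, mul_zero, add_zero, Matrix.sub_apply,
    vecMulVec_apply]
  ring

/-- For `U, V ∈ SO(3)`, `D = diag (d₁,d₂,d₃)`, a unit vector `a` and an angle `θ`: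
`tr((U exp(θ â) Vᵀ)ᵀ (U D Vᵀ)) =
  (d₁+d₂+d₃) − (1−cos θ)((d₂+d₃)a₁² + (d₃+d₁)a₂² + (d₁+d₂)a₃²)`. -/
theorem trace_rotated_mean (d : Fin 3 → ℝ) (U V : M3) (hU : U ∈ SO3) (hV : V ∈ SO3)
    (a : Fin 3 → ℝ) (ha : a ⬝ᵥ a = 1) (θ : ℝ) :
    ((U * NormedSpace.exp (θ • hat a) * Vᵀ)ᵀ * (U * Matrix.diagonal d * Vᵀ)).trace
      = (d 0 + d 1 + d 2) - (1 - Real.cos θ) *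
          ((d 1 + d 2) * a 0 ^ 2 + (d 2 + d 0) * a 1 ^ 2 + (d 0 + d 1) * a 2 ^ 2) := by
  have hnorm : a 0 ^ 2 + a 1 ^ 2 + a 2 ^ 2 = 1 := by
    simpa only [sq, dotProduct, Fin.sum_univ_three] using ha
  rw [trace_transpose_mul_eq_of_orthogonal hU.1 hV.1, trace_transpose_mul_diagonal]
  simp only [exp_smul_hat_apply_self ha, Fin.sum_univ_three]
  linear_combination (1 - Real.cos θ) * (d 0 + d 1 + d 2) * hnorm
end
end

section
/- Let U, V ∈ SO(3) and D = diag(d₁,d₂,d₃) with d₁ ≥ d₂ ≥ |d₃| ≥ 0 and d₂ + d₃ > 0. Then for every Q ∈ SO(3), tr(Qᵀ (U D Vᵀ)) ≤ d₁ + d₂ + d₃, and equality holds if and only if Q = U Vᵀ; that is, U Vᵀ is the unique maximizer of Q ↦ tr(Qᵀ U D Vᵀ) over SO(3). -/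
open MeasureTheory Matrix

noncomputable section

set_option maxHeartbeats 1000000

private lemma aux_zeros (a b c : ℝ) (h : a ^ 2 + b ^ 2 + c ^ 2 = 1) (ha : a = 1) :
    b = 0 ∧ c = 0 := by
  subst ha
  have hb : b ^ 2 = 0 := by nlinarith [sq_nonneg b, sq_nonneg c]
  have hc : c ^ 2 = 0 := by nlinarith [sq_nonneg b, sq_nonneg c]
  exact ⟨pow_eq_zero_iff two_ne_zero |>.mp hb, pow_eq_zero_iff two_ne_zero |>.mp hc⟩

private lemma aux_le_one (a b c : ℝ) (h : a ^ 2 + b ^ 2 + c ^ 2 = 1) : a ≤ 1 := by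
  nlinarith [sq_nonneg (a - 1), sq_nonneg b, sq_nonneg c]

private lemma aux_t_nonneg (t s1 s2 s3 : ℝ) (h : t * (4 - t) = s1 ^ 2 + s2 ^ 2 + s3 ^ 2) :
    0 ≤ t := by nlinarith [sq_nonneg s1, sq_nonneg s2, sq_nonneg s3, sq_nonneg t]

private lemma wahba_scalar (r00 r01 r02 r10 r11 r12 r20 r21 r22 d0 d1 d2 : ℝ)
    (row0 : r00 ^ 2 + r01 ^ 2 + r02 ^ 2 = 1)
    (row1 : r10 ^ 2 + r11 ^ 2 + r12 ^ 2 = 1)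
    (row2 : r20 ^ 2 + r21 ^ 2 + r22 ^ 2 = 1)
    (col0 : r00 ^ 2 + r10 ^ 2 + r20 ^ 2 = 1)
    (col1 : r01 ^ 2 + r11 ^ 2 + r21 ^ 2 = 1)
    (E0 : r00 = r11 * r22 - r12 * r21)
    (E1 : r11 = r00 * r22 - r02 * r20)
    (E2 : r22 = r00 * r11 - r01 * r10)
    (h1 : d1 ≤ d0) (h2 : |d2| ≤ d1) (h3 : 0 < d1 + d2) :
    d0 * r00 + d1 * r11 + d2 * r22 ≤ d0 + d1 + d2 ∧
    (d0 * r00 + d1 * r11 + d2 * r22 = d0 + d1 + d2 →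
      r00 = 1 ∧ r01 = 0 ∧ r02 = 0 ∧ r10 = 0 ∧ r11 = 1 ∧ r12 = 0 ∧
        r20 = 0 ∧ r21 = 0 ∧ r22 = 1) := by
  have hA : (1 + r22 - r00 - r11) * (4 - (1 + r22 - r00 - r11)) =
      (r10 - r01) ^ 2 + (r02 + r20) ^ 2 + (r12 + r21) ^ 2 := by
    linear_combination (-1 : ℝ) * row0 - row1 - row2 + 2 * E2 - 2 * E1 - 2 * E0
  have ht : 0 ≤ 1 + r22 - r00 - r11 := aux_t_nonneg _ _ _ _ hA
  have hb00 : r00 ≤ 1 := aux_le_one _ _ _ col0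
  have hb11 : r11 ≤ 1 := aux_le_one _ _ _ (by linarith [col1] : r11 ^ 2 + r01 ^ 2 + r21 ^ 2 = 1)
  have hb22 : r22 ≤ 1 := aux_le_one _ _ _ (by linarith [row2] : r22 ^ 2 + r20 ^ 2 + r21 ^ 2 = 1)
  have habs1 : -d1 ≤ d2 := neg_le_of_abs_le h2
  have habs2 : d2 ≤ d1 := le_of_abs_le h2
  have hd1pos : 0 < d1 := by linarith
  have hd0pos : 0 < d0 := by linarith
  rcases le_or_gt d2 0 with hs | hs
  · have hApos : 0 ≤ (d0 + d2) * (1 - r00) :=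
      mul_nonneg (by linarith) (by linarith)
    have hBpos : 0 ≤ (d1 + d2) * (1 - r11) :=
      mul_nonneg (by linarith) (by linarith)
    have hCpos : 0 ≤ (-d2) * (1 + r22 - r00 - r11) :=
      mul_nonneg (by linarith) ht
    have hdecomp : (d0 + d1 + d2) - (d0 * r00 + d1 * r11 + d2 * r22) =
        (d0 + d2) * (1 - r00) + (d1 + d2) * (1 - r11) +
          (-d2) * (1 + r22 - r00 - r11) := by ring
    constructor
    · linarith
    · intro heq
      have hA0 : (d0 + d2) * (1 - r00) = 0 := by linarith
      have hB0 : (d1 + d2) * (1 - r11) = 0 := by linarith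
      have h00 : r00 = 1 := by
        rcases mul_eq_zero.mp hA0 with h | h
        · exfalso; linarith
        · linarith
      have h11 : r11 = 1 := by
        rcases mul_eq_zero.mp hB0 with h | h
        · exfalso; linarith
        · linarith
      obtain ⟨z01, z02⟩ := aux_zeros _ _ _ row0 h00
      obtain ⟨z10, z12⟩ := aux_zeros _ _ _ (by linarith [row1] : r11 ^ 2 + r10 ^ 2 + r12 ^ 2 = 1) h11
      obtain ⟨z10', z20⟩ := aux_zeros _ _ _ col0 h00
      obtain ⟨z01', z21⟩ := aux_zeros _ _ _ (by linarith [col1] : r11 ^ 2 + r01 ^ 2 + r21 ^ 2 = 1) h11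
      have h22 : r22 = 1 := by rw [h11, z12, z21] at E0; linarith
      exact ⟨h00, z01, z02, z10, h11, z12, z20, z21, h22⟩
  · have hApos : 0 ≤ d0 * (1 - r00) := mul_nonneg (by linarith) (by linarith)
    have hBpos : 0 ≤ d1 * (1 - r11) := mul_nonneg (by linarith) (by linarith)
    have hCpos : 0 ≤ d2 * (1 - r22) := mul_nonneg (by linarith) (by linarith)
    have hdecomp : (d0 + d1 + d2) - (d0 * r00 + d1 * r11 + d2 * r22) =
        d0 * (1 - r00) + d1 * (1 - r11) + d2 * (1 - r22) := by ring
    constructor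
    · linarith
    · intro heq
      have hA0 : d0 * (1 - r00) = 0 := by linarith
      have hB0 : d1 * (1 - r11) = 0 := by linarith
      have h00 : r00 = 1 := by
        rcases mul_eq_zero.mp hA0 with h | h
        · exfalso; linarith
        · linarith
      have h11 : r11 = 1 := by
        rcases mul_eq_zero.mp hB0 with h | h
        · exfalso; linarith
        · linarith
      obtain ⟨z01, z02⟩ := aux_zeros _ _ _ row0 h00
      obtain ⟨z10, z12⟩ := aux_zeros _ _ _ (by linarith [row1] : r11 ^ 2 + r10 ^ 2 + r12 ^ 2 = 1) h11
      obtain ⟨z10', z20⟩ := aux_zeros _ _ _ col0 h00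
      obtain ⟨z01', z21⟩ := aux_zeros _ _ _ (by linarith [col1] : r11 ^ 2 + r01 ^ 2 + r21 ^ 2 = 1) h11
      have h22 : r22 = 1 := by rw [h11, z12, z21] at E0; linarith
      exact ⟨h00, z01, z02, z10, h11, z12, z20, z21, h22⟩

private lemma SO3_transpose {R : M3} (h : R ∈ SO3) : Rᵀ ∈ SO3 := by
  obtain ⟨h1, h2⟩ := h
  exact ⟨by rw [transpose_transpose]; exact mul_eq_one_comm.mpr h1,
    by rw [det_transpose]; exact h2⟩

private lemma SO3_mul {A B : M3} (hA : A ∈ SO3) (hB : B ∈ SO3) : A * B ∈ SO3 := by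
  obtain ⟨a1, a2⟩ := hA; obtain ⟨b1, b2⟩ := hB
  constructor
  · rw [transpose_mul]
    calc Bᵀ * Aᵀ * (A * B) = Bᵀ * (Aᵀ * A) * B := by noncomm_ring
    _ = 1 := by rw [a1, mul_one, b1]
  · rw [det_mul, a2, b2, one_mul]

/-- **Unique maximizer case of Wahba's problem.** If `d₁ ≥ d₂ ≥ |d₃| ≥ 0` and
`d₂ + d₃ > 0`, then for every `Q ∈ SO(3)`, `tr(Qᵀ U D Vᵀ) ≤ d₁ + d₂ + d₃`, with
equality iff `Q = U Vᵀ`. -/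
theorem mmse_unique (U V : M3) (hU : U ∈ SO3) (hV : V ∈ SO3) (d : Fin 3 → ℝ)
    (h1 : d 1 ≤ d 0) (h2 : |d 2| ≤ d 1) (h3 : 0 < d 1 + d 2)
    (Q : M3) (hQ : Q ∈ SO3) :
    (Qᵀ * (U * Matrix.diagonal d * Vᵀ)).trace ≤ d 0 + d 1 + d 2 ∧
      ((Qᵀ * (U * Matrix.diagonal d * Vᵀ)).trace = d 0 + d 1 + d 2 ↔ Q = U * Vᵀ) := by
  set R : M3 := Uᵀ * Q * V with hRdef
  have hR : R ∈ SO3 := SO3_mul (SO3_mul (SO3_transpose hU) hQ) hV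
  have htr : (Qᵀ * (U * Matrix.diagonal d * Vᵀ)).trace =
      d 0 * R 0 0 + d 1 * R 1 1 + d 2 * R 2 2 := by
    have h' : Qᵀ * (U * Matrix.diagonal d * Vᵀ) = Qᵀ * U * Matrix.diagonal d * Vᵀ := by
      noncomm_ring
    rw [h', Matrix.trace_mul_comm, hRdef]
    simp [Matrix.trace, Matrix.diag, Matrix.mul_apply, Matrix.diagonal, Fin.sum_univ_three]
    ring
  -- scalar data of R
  obtain ⟨ho, hdet⟩ := hR
  have hrow : R * Rᵀ = 1 := mul_eq_one_comm.mpr ho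
  have hadj : R.adjugate = Rᵀ := by
    have e1 : R⁻¹ = Rᵀ := inv_eq_right_inv hrow
    have e2 : R⁻¹ = R.adjugate := by
      have := Matrix.mul_adjugate R
      rw [hdet, one_smul] at this
      exact inv_eq_right_inv this
    rw [← e1, ← e2]
  have row0 : R 0 0 ^ 2 + R 0 1 ^ 2 + R 0 2 ^ 2 = 1 := by
    have := congrFun (congrFun hrow 0) 0
    simpa [Matrix.mul_apply, Fin.sum_univ_three, Matrix.one_apply, sq] using this
  have row1 : R 1 0 ^ 2 + R 1 1 ^ 2 + R 1 2 ^ 2 = 1 := by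
    have := congrFun (congrFun hrow 1) 1
    simpa [Matrix.mul_apply, Fin.sum_univ_three, Matrix.one_apply, sq] using this
  have row2 : R 2 0 ^ 2 + R 2 1 ^ 2 + R 2 2 ^ 2 = 1 := by
    have := congrFun (congrFun hrow 2) 2
    simpa [Matrix.mul_apply, Fin.sum_univ_three, Matrix.one_apply, sq] using this
  have col0 : R 0 0 ^ 2 + R 1 0 ^ 2 + R 2 0 ^ 2 = 1 := by
    have := congrFun (congrFun ho 0) 0
    simpa [Matrix.mul_apply, Fin.sum_univ_three, Matrix.one_apply, sq] using this
  have col1 : R 0 1 ^ 2 + R 1 1 ^ 2 + R 2 1 ^ 2 = 1 := by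
    have := congrFun (congrFun ho 1) 1
    simpa [Matrix.mul_apply, Fin.sum_univ_three, Matrix.one_apply, sq] using this
  have E0 : R 0 0 = R 1 1 * R 2 2 - R 1 2 * R 2 1 := by
    have := congrFun (congrFun hadj 0) 0
    rw [Matrix.adjugate_fin_three] at this
    simpa using this.symm
  have E1 : R 1 1 = R 0 0 * R 2 2 - R 0 2 * R 2 0 := by
    have := congrFun (congrFun hadj 1) 1
    rw [Matrix.adjugate_fin_three] at this
    simpa using this.symm
  have E2 : R 2 2 = R 0 0 * R 1 1 - R 0 1 * R 1 0 := by
    have := congrFun (congrFun hadj 2) 2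
    rw [Matrix.adjugate_fin_three] at this
    simpa using this.symm
  obtain ⟨hineq, heqc⟩ := wahba_scalar (R 0 0) (R 0 1) (R 0 2) (R 1 0) (R 1 1) (R 1 2)
    (R 2 0) (R 2 1) (R 2 2) (d 0) (d 1) (d 2) row0 row1 row2 col0 col1 E0 E1 E2 h1 h2 h3
  have hQR : Q = U * R * Vᵀ := by
    have hU' : U * Uᵀ = 1 := mul_eq_one_comm.mpr hU.1
    have hV' : V * Vᵀ = 1 := mul_eq_one_comm.mpr hV.1
    rw [hRdef]
    calc Q = (U * Uᵀ) * Q * (V * Vᵀ) := by rw [hU', hV']; noncomm_ring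
    _ = U * (Uᵀ * Q * V) * Vᵀ := by noncomm_ring
  refine ⟨by rw [htr]; exact hineq, ?_, fun hQe => ?_⟩
  · intro heq
    rw [htr] at heq
    obtain ⟨e00, e01, e02, e10, e11, e12, e20, e21, e22⟩ := heqc heq
    have hR1 : R = 1 := by
      ext i j
      fin_cases i <;> fin_cases j <;>
        simp [Matrix.one_apply, e00, e01, e02, e10, e11, e12, e20, e21, e22]
    rw [hQR, hR1, mul_one]
  · have hR1 : R = 1 := by
      rw [hRdef, hQe]
      calc Uᵀ * (U * Vᵀ) * V = (Uᵀ * U) * (Vᵀ * V) := by noncomm_ring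
      _ = 1 := by rw [hU.1, hV.1, mul_one]
    rw [htr, hR1]
    simp [Matrix.one_apply]
end
end

section
/- Let U, V ∈ SO(3) and D = diag(d₁,d₂,d₃) with d₁ ≥ d₂ ≥ |d₃| ≥ 0, d₁ ≠ d₂ and d₂ + d₃ = 0. Then for every Q ∈ SO(3), tr(Qᵀ (U D Vᵀ)) ≤ d₁ + d₂ + d₃, and equality holds if and only if Q = U exp(θ ê₁) Vᵀ for some θ ∈ ℝ, where e₁ = (1,0,0); that is, the set of maximizers of Q ↦ tr(Qᵀ U D Vᵀ) over SO(3) is the one-dimensional set {U exp(θ ê₁) Vᵀ : θ ∈ ℝ}. -/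
open MeasureTheory Matrix

noncomputable section

/-!
Put `R = Uᵀ Q V ∈ SO(3)` and `s = R₁₁ + R₂₂ - R₃₃`. Since `d₃ = -d₂`, the objective is
`d₁ R₁₁ + d₂ (R₂₂ - R₃₃) = (d₁ - d₂) R₁₁ + d₂ s`.
Both `R₁₁ ≤ 1` and `s ≤ 1`: `s` is the trace of the improper orthogonal matrix
`R diag(1, 1, -1)`, and in coordinates `(1 - s) (3 + s)` is a sum of squares once the
cofactor identities `adj R = Rᵀ` are used. As `d₁ > d₂`, equality forces `R₁₁ = 1`, i.e. `R` is a
rotation about `e₁`. These rotations are the images of `(1, z)`, `|z| = 1`, under an algebra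
embedding `ℝ × ℂ → M₃(ℝ)`; being a continuous algebra map it commutes with `exp`, so
`exp (θ ê₁)` is the image of `(1, e^{iθ})`.
-/

namespace Matrix

variable {n α : Type*} [Fintype n] [DecidableEq n] [CommRing α]

theorem trace_transpose_mul_diagonal_eq_sum (Q U V : Matrix n n α) (d : n → α) :
    (Qᵀ * (U * diagonal d * Vᵀ)).trace = ∑ i, d i * (Uᵀ * Q * V) i i := by
  have h : (Uᵀ * Q * V)ᵀ * diagonal d = Vᵀ * (Qᵀ * U * diagonal d) := by
    simp only [transpose_mul, transpose_transpose, Matrix.mul_assoc]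
  rw [← Matrix.mul_assoc, trace_mul_comm, ← Matrix.mul_assoc Qᵀ, ← h]
  simp only [trace, diag_apply, mul_diagonal, transpose_apply, mul_comm]

theorem transpose_mul_mul_eq_iff {U V Q R : Matrix n n α} (hU : Uᵀ * U = 1) (hV : Vᵀ * V = 1) :
    Uᵀ * Q * V = R ↔ Q = U * R * Vᵀ := by
  have hU' : U * Uᵀ = 1 := mul_eq_one_comm.mp hU
  have hV' : V * Vᵀ = 1 := mul_eq_one_comm.mp hV
  constructor
  · rintro rfl
    simp only [← Matrix.mul_assoc, hU', Matrix.one_mul]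
    rw [Matrix.mul_assoc, hV', Matrix.mul_one]
  · rintro rfl
    simp only [← Matrix.mul_assoc, hU, Matrix.one_mul]
    rw [Matrix.mul_assoc, hV, Matrix.mul_one]

end Matrix

section RotationsAboutE₁

-- Any norm will do for `map_exp`: `exp` itself only depends on the (product) topology.
attribute [local instance] Matrix.linftyOpNormedRing Matrix.linftyOpNormedAlgebra

def blockEmbedding : ℝ × ℂ →ₐ[ℝ] M3 where
  toFun p := !![p.1, 0, 0; 0, p.2.re, -p.2.im; 0, p.2.im, p.2.re]
  map_one' := by ext i j; fin_cases i <;> fin_cases j <;> simp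
  map_mul' p q := by
    ext i j; fin_cases i <;> fin_cases j <;> simp [Matrix.mul_apply, Fin.sum_univ_three] <;> ring
  map_zero' := by ext i j; fin_cases i <;> fin_cases j <;> simp
  map_add' p q := by
    ext i j; fin_cases i <;> fin_cases j <;> simp [add_comm]
  commutes' r := by
    ext i j; fin_cases i <;> fin_cases j <;> simp [Algebra.algebraMap_eq_smul_one]

lemma blockEmbedding_apply (p : ℝ × ℂ) :
    blockEmbedding p = !![p.1, 0, 0; 0, p.2.re, -p.2.im; 0, p.2.im, p.2.re] := rfl

lemma smul_hat_e₁ (θ : ℝ) : θ • hat ![1, 0, 0] = blockEmbedding (0, θ * Complex.I) := by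
  ext i j; fin_cases i <;> fin_cases j <;> simp [hat, blockEmbedding_apply]

lemma exp_smul_hat_e₁ (θ : ℝ) :
    NormedSpace.exp (θ • hat ![1, 0, 0]) = blockEmbedding (1, Complex.exp (θ * Complex.I)) := by
  have hcont : Continuous blockEmbedding :=
    LinearMap.continuous_of_finiteDimensional blockEmbedding.toLinearMap
  rw [smul_hat_e₁]
  refine (NormedSpace.map_exp blockEmbedding hcont _).symm.trans (congrArg _ ?_)
  ext
  · simp
  · simp [Complex.exp_eq_exp_ℂ]

end RotationsAboutE₁

namespace SO3

variable {R : M3} {a b : ℝ}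

lemma mul_transpose (hR : R ∈ SO3) : R * Rᵀ = 1 := mul_eq_one_comm.mp hR.1

lemma adjugate_eq_transpose (hR : R ∈ SO3) : R.adjugate = Rᵀ := by
  have := congrArg (· * Rᵀ) (adjugate_mul R)
  simpa [hR.2, Matrix.mul_assoc, mul_transpose hR] using this

lemma col_normSq (hR : R ∈ SO3) (j : Fin 3) : R 0 j ^ 2 + R 1 j ^ 2 + R 2 j ^ 2 = 1 := by
  simpa [Matrix.mul_apply, Fin.sum_univ_three, sq] using congrFun (congrFun hR.1 j) j

lemma row_normSq (hR : R ∈ SO3) (i : Fin 3) : R i 0 ^ 2 + R i 1 ^ 2 + R i 2 ^ 2 = 1 := by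
  simpa [Matrix.mul_apply, Fin.sum_univ_three, sq] using congrFun (congrFun (mul_transpose hR) i) i

lemma diag_cofactor (hR : R ∈ SO3) :
    R 0 0 = R 1 1 * R 2 2 - R 1 2 * R 2 1 ∧ R 1 1 = R 0 0 * R 2 2 - R 0 2 * R 2 0 ∧
      R 2 2 = R 0 0 * R 1 1 - R 0 1 * R 1 0 := by
  have h := (adjugate_fin_three R).symm.trans (adjugate_eq_transpose hR)
  exact ⟨by simpa using (congrFun (congrFun h 0) 0).symm,
    by simpa using (congrFun (congrFun h 1) 1).symm, by simpa using (congrFun (congrFun h 2) 2).symm⟩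

lemma transpose_mul_mul_mem {U Q V : M3} (hU : U ∈ SO3) (hQ : Q ∈ SO3) (hV : V ∈ SO3) :
    Uᵀ * Q * V ∈ SO3 := by
  refine ⟨?_, by simp [det_mul, hU.2, hQ.2, hV.2]⟩
  simp only [transpose_mul, transpose_transpose, Matrix.mul_assoc]
  rw [← Matrix.mul_assoc U, mul_transpose hU, Matrix.one_mul, ← Matrix.mul_assoc Qᵀ, hQ.1,
    Matrix.one_mul, hV.1]

lemma apply_zero_zero_le_one (hR : R ∈ SO3) : R 0 0 ≤ 1 := by
  nlinarith [col_normSq hR 0, sq_nonneg (R 1 0), sq_nonneg (R 2 0), sq_nonneg (R 0 0 - 1)]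

lemma apply_add_apply_sub_apply_le_one (hR : R ∈ SO3) : R 0 0 + R 1 1 - R 2 2 ≤ 1 := by
  obtain ⟨h00, h11, h22⟩ := diag_cofactor hR
  have hsos : (1 - (R 0 0 + R 1 1 - R 2 2)) * (3 + (R 0 0 + R 1 1 - R 2 2)) =
      (R 1 2 + R 2 1) ^ 2 + (R 0 2 + R 2 0) ^ 2 + (R 0 1 - R 1 0) ^ 2 := by
    linear_combination
      -col_normSq hR 0 - col_normSq hR 1 - col_normSq hR 2 - 2 * h00 - 2 * h11 + 2 * h22
  nlinarith [sq_nonneg (R 1 2 + R 2 1), sq_nonneg (R 0 2 + R 2 0), sq_nonneg (R 0 1 - R 1 0),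
    col_normSq hR 0, col_normSq hR 1, col_normSq hR 2]

lemma exists_eq_exp_of_apply_zero_zero (hR : R ∈ SO3) (h : R 0 0 = 1) :
    ∃ θ : ℝ, R = NormedSpace.exp (θ • hat ![1, 0, 0]) := by
  have hcol := col_normSq hR 0
  have hrow := row_normSq hR 0
  rw [h] at hcol hrow
  have h10 : R 1 0 = 0 := by nlinarith [sq_nonneg (R 1 0), sq_nonneg (R 2 0)]
  have h20 : R 2 0 = 0 := by nlinarith [sq_nonneg (R 1 0), sq_nonneg (R 2 0)]
  have h01 : R 0 1 = 0 := by nlinarith [sq_nonneg (R 0 1), sq_nonneg (R 0 2)]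
  have h02 : R 0 2 = 0 := by nlinarith [sq_nonneg (R 0 1), sq_nonneg (R 0 2)]
  obtain ⟨h00, -, -⟩ := diag_cofactor hR
  have hcirc : (R 1 1 - R 2 2) ^ 2 + (R 1 2 + R 2 1) ^ 2 = 0 := by
    linear_combination col_normSq hR 1 + col_normSq hR 2 - hrow + 2 * h00 - 2 * h
  have h22 : R 2 2 = R 1 1 := by nlinarith [sq_nonneg (R 1 1 - R 2 2), sq_nonneg (R 1 2 + R 2 1)]
  have h12 : R 1 2 = -R 2 1 := by nlinarith [sq_nonneg (R 1 1 - R 2 2), sq_nonneg (R 1 2 + R 2 1)]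
  have hz : ‖(⟨R 1 1, R 2 1⟩ : ℂ)‖ = 1 := by
    rw [Complex.norm_def, Complex.normSq_mk, Real.sqrt_eq_one]
    linear_combination col_normSq hR 1 - R 0 1 * h01
  obtain ⟨θ, hθ⟩ := (Complex.norm_eq_one_iff _).mp hz
  refine ⟨θ, ?_⟩
  rw [exp_smul_hat_e₁, hθ, blockEmbedding_apply]
  ext i j
  fin_cases i <;> fin_cases j <;> simp [h, h01, h02, h10, h20, h12, h22]

lemma mul_apply_add_mul_sub_le (hR : R ∈ SO3) (hb : 0 ≤ b) (hab : b ≤ a) :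
    a * R 0 0 + b * (R 1 1 - R 2 2) ≤ a := by
  nlinarith [mul_nonneg (sub_nonneg.mpr hab) (sub_nonneg.mpr (apply_zero_zero_le_one hR)),
    mul_nonneg hb (sub_nonneg.mpr (apply_add_apply_sub_apply_le_one hR))]

lemma mul_apply_add_mul_sub_eq_iff (hR : R ∈ SO3) (hb : 0 ≤ b) (hab : b < a) :
    a * R 0 0 + b * (R 1 1 - R 2 2) = a ↔ ∃ θ : ℝ, R = NormedSpace.exp (θ • hat ![1, 0, 0]) := by
  constructor
  · intro heq
    refine exists_eq_exp_of_apply_zero_zero hR (le_antisymm (apply_zero_zero_le_one hR) ?_)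
    nlinarith [mul_nonneg hb (sub_nonneg.mpr (apply_add_apply_sub_apply_le_one hR))]
  · rintro ⟨θ, rfl⟩
    simp [exp_smul_hat_e₁, blockEmbedding_apply]

end SO3

/-- **One-dimensional maximizer set of Wahba's problem.** If `d₁ ≥ d₂ ≥ |d₃| ≥ 0`,
`d₁ ≠ d₂` and `d₂ + d₃ = 0`, then for every `Q ∈ SO(3)`,
`tr(Qᵀ U D Vᵀ) ≤ d₁ + d₂ + d₃`, with equality iff `Q = U exp(θ ê₁) Vᵀ` for some
`θ ∈ ℝ`. -/
theorem mmse_one_dim (U V : M3) (hU : U ∈ SO3) (hV : V ∈ SO3) (d : Fin 3 → ℝ)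
    (h1 : d 1 ≤ d 0) (h2 : |d 2| ≤ d 1) (hne : d 0 ≠ d 1) (h23 : d 1 + d 2 = 0)
    (Q : M3) (hQ : Q ∈ SO3) :
    (Qᵀ * (U * Matrix.diagonal d * Vᵀ)).trace ≤ d 0 + d 1 + d 2 ∧
      ((Qᵀ * (U * Matrix.diagonal d * Vᵀ)).trace = d 0 + d 1 + d 2 ↔
        ∃ θ : ℝ, Q = U * NormedSpace.exp (θ • hat ![1, 0, 0]) * Vᵀ) := by
  have hR := SO3.transpose_mul_mul_mem hU hQ hV
  have hd1 : 0 ≤ d 1 := (abs_nonneg _).trans h2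
  have htrace : (Qᵀ * (U * Matrix.diagonal d * Vᵀ)).trace =
      d 0 * (Uᵀ * Q * V) 0 0 + d 1 * ((Uᵀ * Q * V) 1 1 - (Uᵀ * Q * V) 2 2) := by
    rw [trace_transpose_mul_diagonal_eq_sum, Fin.sum_univ_three, eq_neg_of_add_eq_zero_right h23]
    ring
  rw [htrace, show d 0 + d 1 + d 2 = d 0 by linarith]
  refine ⟨SO3.mul_apply_add_mul_sub_le hR hd1 h1, ?_⟩
  rw [SO3.mul_apply_add_mul_sub_eq_iff hR hd1 (lt_of_le_of_ne h1 hne.symm)]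
  exact exists_congr fun θ => transpose_mul_mul_eq_iff hU.1 hV.1
end
end

section
/- Let S = diag(s₁,s₂,s₃) with s₁ ≥ s₂ ≥ |s₃| ≥ 0, let dᵢ(S) be the diagonal entries of the first moment of the matrix Fisher distribution M(S), and set D = diag(d₁(S),d₂(S),d₃(S)). Then tr(D)·I − D is positive definite if and only if tr(S)·I − S is positive definite; equivalently, dᵢ(S) + dⱼ(S) > 0 for all pairs of distinct indices i, j if and only if sᵢ + sⱼ > 0 for all pairs of distinct indices i, j. -/
/-!
Up to the positive factor `c(S)`, `d₀ + d₁` is the integral of `(Q₀₀ + Q₁₁) exp tr(SQ)`.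
Averaging this integrand over the left translation by `diag(-1, -1, 1)` and over conjugation by
the transposition of the first two axes, both of which preserve Haar measure, turns it into
`(x + y) (sinh p + sinh q) exp (s₂ Q₂₂)` with `x = Q₀₀`, `y = Q₁₁`, `p = s₀ x + s₁ y`,
`q = s₀ y + s₁ x`. As `p + q = (s₀ + s₁)(x + y)` and `(p + q)(sinh p + sinh q) > 0` unless
`p + q = 0`, the integral has the sign of `s₀ + s₁`, because `{x + y ≠ 0}` is not Haar-null.
Conjugation by permutation matrices carries this to every pair `i ≠ j`, and `tr(D)·I − D` is
positive definite for diagonal `D` exactly when all pairwise sums of its entries are positive.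
-/

open MeasureTheory Matrix

noncomputable section

/-- The normalizing constant `c(S)` of the matrix Fisher distribution with diagonal
parameter `S = diag s`. -/
def cS (μ : Measure M3) (s : Fin 3 → ℝ) : ℝ :=
  ∫ Q, Real.exp ((Matrix.diagonal s * Q).trace) ∂μ

/-- The matrix Fisher density `p_S(Q) = exp(tr(S Q)) / c(S)` with diagonal parameter
`S = diag s`. -/
def pS (μ : Measure M3) (s : Fin 3 → ℝ) (Q : M3) : ℝ :=
  Real.exp ((Matrix.diagonal s * Q).trace) / cS μ s

/-- `dᵢ(S)`: the `i`-th diagonal entry of the first moment `E[Q]` of the matrix Fisher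
distribution `M(S)` with `S = diag s`. -/
def dS (μ : Measure M3) (s : Fin 3 → ℝ) (i : Fin 3) : ℝ :=
  ∫ Q, Q i i * pS μ s Q ∂μ

theorem MeasureTheory.MeasurePreserving.integral_comp_of_aestronglyMeasurable
    {α β G : Type*} [MeasurableSpace α] [MeasurableSpace β] [NormedAddCommGroup G]
    [NormedSpace ℝ G] {μ : Measure α} {ν : Measure β} {T : α → β}
    (hT : MeasurePreserving T μ ν) {f : β → G} (hf : AEStronglyMeasurable f ν) :
    ∫ x, f (T x) ∂μ = ∫ y, f y ∂ν := by
  rw [← hT.map_eq] at hf ⊢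
  exact (integral_map hT.measurable.aemeasurable hf).symm

theorem MeasureTheory.MeasurePreserving.two_mul_integral_eq_integral_add_comp
    {α : Type*} [MeasurableSpace α] {μ : Measure α} {T : α → α}
    (hT : MeasurePreserving T μ μ) {f : α → ℝ} (hf : Integrable f μ) :
    2 * ∫ x, f x ∂μ = ∫ x, f x + f (T x) ∂μ := by
  have hfT : Integrable (fun x => f (T x)) μ := hT.integrable_comp_of_integrable hf
  rw [integral_add hf hfT,
    hT.integral_comp_of_aestronglyMeasurable hf.aestronglyMeasurable, two_mul]

theorem Real.add_mul_sinh_add_sinh_pos {p q : ℝ} (h : p + q ≠ 0) :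
    0 < (p + q) * (sinh p + sinh q) := by
  rcases h.lt_or_gt with h | h
  · have : sinh p < sinh (-q) := Real.sinh_lt_sinh.mpr (by linarith)
    rw [Real.sinh_neg] at this
    exact mul_pos_of_neg_of_neg h (by linarith)
  · have : sinh (-q) < sinh p := Real.sinh_lt_sinh.mpr (by linarith)
    rw [Real.sinh_neg] at this
    exact mul_pos h (by linarith)

theorem Real.add_mul_sinh_add_sinh_nonneg (p q : ℝ) : 0 ≤ (p + q) * (sinh p + sinh q) := by
  rcases eq_or_ne (p + q) 0 with h | h
  · rw [h, zero_mul]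
  · exact (Real.add_mul_sinh_add_sinh_pos h).le

namespace Matrix

variable {n R : Type*} [Fintype n] [DecidableEq n]

theorem transpose_permMatrix_mul_self [NonAssocSemiring R] (σ : Equiv.Perm n) :
    (σ.permMatrix R)ᵀ * σ.permMatrix R = 1 := by
  rw [transpose_permMatrix, ← permMatrix_mul, mul_inv_cancel, permMatrix_one]

theorem permMatrix_mul_apply [NonAssocSemiring R] (σ : Equiv.Perm n) (Q : Matrix n n R)
    (a b : n) : (σ.permMatrix R * Q) a b = Q (σ a) b := by
  rw [Equiv.Perm.permMatrix, PEquiv.toMatrix_toPEquiv_mul, submatrix_apply, id]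

theorem permMatrix_mul_mul_transpose [NonAssocSemiring R] (σ : Equiv.Perm n)
    (Q : Matrix n n R) : σ.permMatrix R * Q * (σ.permMatrix R)ᵀ = Q.submatrix σ σ := by
  rw [transpose_permMatrix, Equiv.Perm.permMatrix, Equiv.Perm.permMatrix,
    PEquiv.toMatrix_toPEquiv_mul, PEquiv.mul_toMatrix_toPEquiv, submatrix_submatrix]
  rfl

theorem trace_diagonal_mul_submatrix [CommRing R] (s : n → R) (σ : Equiv.Perm n)
    (Q : Matrix n n R) :
    (diagonal s * Q.submatrix σ.symm σ.symm).trace = (diagonal (s ∘ σ) * Q).trace := by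
  simp only [trace, diag_apply, diagonal_mul, submatrix_apply, Function.comp_apply]
  exact Fintype.sum_equiv σ.symm _ _ fun i => by simp

end Matrix

theorem trace_diagonal_mul_fin_three (s : Fin 3 → ℝ) (Q : M3) :
    (diagonal s * Q).trace = s 0 * Q 0 0 + s 1 * Q 1 1 + s 2 * Q 2 2 := by
  simp [trace, diagonal_mul, Fin.sum_univ_three]

namespace SO3

theorem transpose_mem {A : M3} (hA : A ∈ SO3) : Aᵀ ∈ SO3 :=
  ⟨by rw [transpose_transpose]; exact mul_eq_one_comm.mp hA.1,
    by rw [det_transpose]; exact hA.2⟩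

theorem mem_or_neg_mem {O : M3} (hO : Oᵀ * O = 1) : O ∈ SO3 ∨ -O ∈ SO3 := by
  have hdet : O.det * O.det = 1 := by
    rw [← det_one (n := Fin 3) (R := ℝ), ← hO, det_mul, det_transpose]
  rcases mul_self_eq_one_iff.mp hdet with h | h
  · exact Or.inl ⟨hO, h⟩
  · exact Or.inr ⟨by simpa using hO, by norm_num [det_neg, h]⟩

theorem diagonal_mem {d : Fin 3 → ℝ} (hd : ∀ i, d i * d i = 1) (hdet : d 0 * d 1 * d 2 = 1) :
    diagonal d ∈ SO3 := by
  refine ⟨?_, by rw [det_diagonal, Fin.prod_univ_three, hdet]⟩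
  rw [diagonal_transpose, diagonal_mul_diagonal, ← diagonal_one]
  exact congrArg diagonal (funext hd)

theorem abs_apply_le_one {Q : M3} (hQ : Q ∈ SO3) (a b : Fin 3) : |Q a b| ≤ 1 := by
  have h := congrFun₂ hQ.1 b b
  simp only [mul_apply, transpose_apply, one_apply_eq] at h
  rw [abs_le_one_iff_mul_self_le_one, ← h]
  exact Finset.single_le_sum (f := fun r => Q r b * Q r b) (fun r _ => mul_self_nonneg _)
    (Finset.mem_univ a)

theorem isCompact : IsCompact SO3 := by
  have hclosed : IsClosed SO3 :=
    (isClosed_eq (by fun_prop) continuous_const).inter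
      (isClosed_eq (by fun_prop) continuous_const)
  exact (isCompact_univ_pi fun _ => isCompact_univ_pi fun _ => isCompact_Icc).of_isClosed_subset
    hclosed fun Q hQ a _ b _ => abs_le.mp (abs_apply_le_one hQ a b)

end SO3

/-- Half the sum of `(Q₀₀ + Q₁₁) exp tr(diag s Q)` over the four images of `Q` under the group
generated by `Q ↦ diag(-1, -1, 1) Q` and conjugation by the transposition of the first two axes. -/
def pairKernel (s : Fin 3 → ℝ) (Q : M3) : ℝ :=
  (Q 0 0 + Q 1 1) *
    (Real.sinh (s 0 * Q 0 0 + s 1 * Q 1 1) + Real.sinh (s 0 * Q 1 1 + s 1 * Q 0 0)) *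
    Real.exp (s 2 * Q 2 2)

theorem continuous_pairKernel (s : Fin 3 → ℝ) : Continuous (pairKernel s) := by
  unfold pairKernel; fun_prop

theorem add_mul_pairKernel (s : Fin 3 → ℝ) (Q : M3) :
    (s 0 + s 1) * pairKernel s Q =
      ((s 0 * Q 0 0 + s 1 * Q 1 1) + (s 0 * Q 1 1 + s 1 * Q 0 0)) *
        (Real.sinh (s 0 * Q 0 0 + s 1 * Q 1 1) + Real.sinh (s 0 * Q 1 1 + s 1 * Q 0 0)) *
        Real.exp (s 2 * Q 2 2) := by
  unfold pairKernel; ring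

theorem add_mul_pairKernel_nonneg (s : Fin 3 → ℝ) (Q : M3) :
    0 ≤ (s 0 + s 1) * pairKernel s Q := by
  rw [add_mul_pairKernel]
  exact mul_nonneg (Real.add_mul_sinh_add_sinh_nonneg _ _) (Real.exp_pos _).le

theorem add_mul_pairKernel_pos {s : Fin 3 → ℝ} (hs : s 0 + s 1 ≠ 0) {Q : M3}
    (hQ : Q 0 0 + Q 1 1 ≠ 0) : 0 < (s 0 + s 1) * pairKernel s Q := by
  rw [add_mul_pairKernel]
  refine mul_pos (Real.add_mul_sinh_add_sinh_pos ?_) (Real.exp_pos _)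
  rw [show s 0 * Q 0 0 + s 1 * Q 1 1 + (s 0 * Q 1 1 + s 1 * Q 0 0) =
    (s 0 + s 1) * (Q 0 0 + Q 1 1) by ring]
  exact mul_ne_zero hs hQ

theorem pairKernel_eq_zero {s : Fin 3 → ℝ} (hs : s 0 + s 1 = 0) (Q : M3) :
    pairKernel s Q = 0 := by
  rw [pairKernel, eq_neg_of_add_eq_zero_right hs,
    show s 0 * Q 1 1 + -s 0 * Q 0 0 = -(s 0 * Q 0 0 + -s 0 * Q 1 1) by ring, Real.sinh_neg]
  ring

namespace IsHaarSO3

variable {μ : Measure M3} (hμ : IsHaarSO3 μ)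
include hμ

theorem ae_mem : ∀ᵐ Q ∂μ, Q ∈ SO3 :=
  ae_iff.mpr hμ.carried

theorem integrable_of_continuous_s15 {F : M3 → ℝ} (hF : Continuous F) : Integrable F μ := by
  have := hμ.prob
  have h := hF.continuousOn.integrableOn_compact (μ := μ) SO3.isCompact
  rwa [IntegrableOn, Measure.restrict_eq_self_of_ae_mem hμ.ae_mem] at h

theorem measurePreserving_mul_left {U : M3} (hU : U ∈ SO3) :
    MeasurePreserving (U * ·) μ μ :=
  ⟨(by fun_prop : Continuous (U * ·)).measurable, hμ.map_left U hU⟩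

theorem measurePreserving_mul_right {V : M3} (hV : V ∈ SO3) :
    MeasurePreserving (· * V) μ μ :=
  ⟨(by fun_prop : Continuous (· * V)).measurable, hμ.map_right V hV⟩

theorem measurePreserving_conj {O : M3} (hO : Oᵀ * O = 1) :
    MeasurePreserving (fun Q => O * Q * Oᵀ) μ μ := by
  rcases SO3.mem_or_neg_mem hO with hO' | hO'
  · exact (hμ.measurePreserving_mul_right (SO3.transpose_mem hO')).comp
      (hμ.measurePreserving_mul_left hO')
  · convert (hμ.measurePreserving_mul_right (SO3.transpose_mem hO')).comp
      (hμ.measurePreserving_mul_left hO') using 1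
    funext Q
    simp

theorem measurePreserving_submatrix (σ : Equiv.Perm (Fin 3)) :
    MeasurePreserving (fun Q : M3 => Q.submatrix σ σ) μ μ := by
  simpa only [permMatrix_mul_mul_transpose] using
    hμ.measurePreserving_conj (transpose_permMatrix_mul_self σ)

theorem integral_comp_submatrix (σ : Equiv.Perm (Fin 3)) {F : M3 → ℝ} (hF : Continuous F) :
    ∫ Q, F (Q.submatrix σ σ) ∂μ = ∫ Q, F Q ∂μ :=
  (hμ.measurePreserving_submatrix σ).integral_comp_of_aestronglyMeasurable
    hF.aestronglyMeasurable

theorem not_ae_apply_eq_zero (a b : Fin 3) : ¬ ∀ᵐ Q ∂μ, Q a b = 0 := by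
  intro h
  have hcol (r : Fin 3) : ∀ᵐ Q ∂μ, Q r b = 0 := by
    -- `±P` lies in `SO3`, and left multiplication by it moves row `r` to row `a` (up to sign)
    set P := (Equiv.swap a r).permMatrix ℝ
    have hP : ∀ᵐ Q ∂μ, (P * Q) a b = 0 := by
      rcases SO3.mem_or_neg_mem (transpose_permMatrix_mul_self (Equiv.swap a r)) with hP | hP
      · exact (hμ.measurePreserving_mul_left hP).quasiMeasurePreserving.ae h
      · simpa using (hμ.measurePreserving_mul_left hP).quasiMeasurePreserving.ae h
    simpa [P, permMatrix_mul_apply] using hP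
  have := hμ.prob
  obtain ⟨Q, hQ, hzero⟩ := (hμ.ae_mem.and (ae_all_iff.mpr hcol)).exists
  simpa [mul_apply, hzero] using congrFun₂ hQ.1 b b

theorem not_ae_apply_zero_zero_add_apply_one_one_eq_zero :
    ¬ ∀ᵐ Q ∂μ, Q 0 0 + Q 1 1 = 0 := by
  intro h
  have hT : diagonal ![-1, 1, -1] ∈ SO3 :=
    SO3.diagonal_mem (fun i => by fin_cases i <;> simp) (by simp)
  refine hμ.not_ae_apply_eq_zero 0 0 ?_
  filter_upwards [h, (hμ.measurePreserving_mul_left hT).quasiMeasurePreserving.ae h]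
    with Q hQ hTQ
  simp only [diagonal_mul, cons_val_zero, cons_val_one, neg_mul, one_mul] at hTQ
  linarith

theorem cS_pos (s : Fin 3 → ℝ) : 0 < cS μ s := by
  have := hμ.prob
  exact integral_exp_pos (hμ.integrable_of_continuous_s15 (by fun_prop))

theorem cS_comp_perm (s : Fin 3 → ℝ) (σ : Equiv.Perm (Fin 3)) :
    cS μ (s ∘ σ) = cS μ s := by
  simp_rw [cS, ← trace_diagonal_mul_submatrix]
  exact hμ.integral_comp_submatrix σ.symm (F := fun Q => Real.exp (diagonal s * Q).trace)
    (by fun_prop)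

theorem dS_comp_perm (s : Fin 3 → ℝ) (σ : Equiv.Perm (Fin 3)) (i : Fin 3) :
    dS μ (s ∘ σ) i = dS μ s (σ i) := by
  simp_rw [dS, pS, hμ.cS_comp_perm, ← trace_diagonal_mul_submatrix]
  have := hμ.integral_comp_submatrix σ.symm
    (F := fun Q => Q (σ i) (σ i) * (Real.exp (diagonal s * Q).trace / cS μ s)) (by fun_prop)
  simpa using this

theorem integral_pairKernel (s : Fin 3 → ℝ) :
    ∫ Q, pairKernel s Q ∂μ =
      2 * ∫ Q, (Q 0 0 + Q 1 1) * Real.exp (diagonal s * Q).trace ∂μ := by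
  set F : M3 → ℝ := fun Q => (Q 0 0 + Q 1 1) * Real.exp (diagonal s * Q).trace
  set H : M3 → ℝ := fun Q => (Q 0 0 + Q 1 1) * Real.sinh (s 0 * Q 0 0 + s 1 * Q 1 1)
    * Real.exp (s 2 * Q 2 2)
  set σ := Equiv.swap (0 : Fin 3) 1
  set D : M3 := diagonal ![-1, -1, 1]
  have hD : D ∈ SO3 := SO3.diagonal_mem (fun i => by fin_cases i <;> simp) (by simp)
  have hFH (Q : M3) : F Q + F (D * Q) = 2 * H Q := by
    have h00 : (D * Q) 0 0 = -Q 0 0 := by simp [D]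
    have h11 : (D * Q) 1 1 = -Q 1 1 := by simp [D]
    have h22 : (D * Q) 2 2 = Q 2 2 := by simp [D]
    simp only [F, H, trace_diagonal_mul_fin_three, h00, h11, h22]
    rw [show s 0 * -Q 0 0 + s 1 * -Q 1 1 + s 2 * Q 2 2
        = -(s 0 * Q 0 0 + s 1 * Q 1 1) + s 2 * Q 2 2 by ring,
      Real.exp_add (s 0 * Q 0 0 + s 1 * Q 1 1), Real.exp_add (-(s 0 * Q 0 0 + s 1 * Q 1 1)),
      Real.sinh_eq]
    ring
  have hHK (Q : M3) : H Q + H (Q.submatrix σ σ) = pairKernel s Q := by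
    simp only [H, pairKernel, σ, submatrix_apply, Equiv.swap_apply_left, Equiv.swap_apply_right,
      Equiv.swap_apply_of_ne_of_ne (by decide : (2 : Fin 3) ≠ 0) (by decide : (2 : Fin 3) ≠ 1)]
    ring
  calc ∫ Q, pairKernel s Q ∂μ = ∫ Q, H Q + H (Q.submatrix σ σ) ∂μ := by simp_rw [hHK]
    _ = 2 * ∫ Q, H Q ∂μ :=
      ((hμ.measurePreserving_submatrix σ).two_mul_integral_eq_integral_add_comp
        (hμ.integrable_of_continuous_s15 (by fun_prop))).symm
    _ = ∫ Q, F Q + F (D * Q) ∂μ := by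
      simp_rw [hFH, integral_const_mul]
    _ = 2 * ∫ Q, F Q ∂μ :=
      ((hμ.measurePreserving_mul_left hD).two_mul_integral_eq_integral_add_comp
        (hμ.integrable_of_continuous_s15 (by fun_prop))).symm

theorem dS_zero_add_dS_one (s : Fin 3 → ℝ) :
    dS μ s 0 + dS μ s 1 = (∫ Q, pairKernel s Q ∂μ) / (2 * cS μ s) := by
  have hint (a : Fin 3) : Integrable (fun Q : M3 => Q a a * pS μ s Q) μ :=
    hμ.integrable_of_continuous_s15 (by unfold pS; fun_prop)
  rw [hμ.integral_pairKernel, mul_div_mul_left _ _ two_ne_zero, ← integral_div, dS, dS,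
    ← integral_add (hint 0) (hint 1)]
  congr 1 with Q
  rw [pS]
  ring

theorem mul_integral_pairKernel_pos {s : Fin 3 → ℝ} (hs : s 0 + s 1 ≠ 0) :
    0 < (s 0 + s 1) * ∫ Q, pairKernel s Q ∂μ := by
  rw [← integral_const_mul, integral_pos_iff_support_of_nonneg (add_mul_pairKernel_nonneg s)
    (hμ.integrable_of_continuous_s15 (continuous_const.mul (continuous_pairKernel s)))]
  refine pos_iff_ne_zero.mpr fun h0 => hμ.not_ae_apply_zero_zero_add_apply_one_one_eq_zero ?_
  exact ae_iff.mpr (measure_mono_null (fun Q hQ => (add_mul_pairKernel_pos hs hQ).ne') h0)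

theorem dS_zero_add_dS_one_pos_iff (s : Fin 3 → ℝ) :
    0 < dS μ s 0 + dS μ s 1 ↔ 0 < s 0 + s 1 := by
  rw [hμ.dS_zero_add_dS_one, div_pos_iff_of_pos_right (mul_pos two_pos (hμ.cS_pos s))]
  rcases eq_or_ne (s 0 + s 1) 0 with hs | hs
  · simp [pairKernel_eq_zero hs, hs]
  · exact (pos_iff_pos_of_mul_pos (hμ.mul_integral_pairKernel_pos hs)).symm

theorem dS_add_dS_pos_iff (s : Fin 3 → ℝ) {i j : Fin 3} (hij : i ≠ j) :
    0 < dS μ s i + dS μ s j ↔ 0 < s i + s j := by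
  obtain ⟨σ, rfl, rfl⟩ : ∃ σ : Equiv.Perm (Fin 3), σ 0 = i ∧ σ 1 = j := by
    revert i j; decide
  simpa only [hμ.dS_comp_perm, Function.comp_apply] using hμ.dS_zero_add_dS_one_pos_iff (s ∘ σ)

end IsHaarSO3

theorem posDef_trace_smul_one_sub_diagonal_iff (v : Fin 3 → ℝ) :
    ((diagonal v).trace • (1 : M3) - diagonal v).PosDef ↔
      ∀ i j : Fin 3, i ≠ j → 0 < v i + v j := by
  rw [smul_one_eq_diagonal, diagonal_sub, posDef_diagonal_iff, trace_diagonal,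
    Fin.sum_univ_three]
  constructor
  · intro h i j hij
    fin_cases i <;> fin_cases j <;> simp at hij ⊢ <;> linarith [h 0, h 1, h 2]
  · intro h l
    fin_cases l <;> simp <;>
      linarith [h 0 1 (by decide), h 0 2 (by decide), h 1 2 (by decide)]

theorem observability_criteria_equiv_general (μ : Measure M3) (hμ : IsHaarSO3 μ)
    (s : Fin 3 → ℝ) :
    (((Matrix.diagonal (fun i => dS μ s i)).trace • (1 : M3)
          - Matrix.diagonal (fun i => dS μ s i)).PosDef ↔
        ((Matrix.diagonal s).trace • (1 : M3) - Matrix.diagonal s).PosDef) ∧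
    ((∀ i j : Fin 3, i ≠ j → 0 < dS μ s i + dS μ s j) ↔
        (∀ i j : Fin 3, i ≠ j → 0 < s i + s j)) := by
  have hpairs : (∀ i j : Fin 3, i ≠ j → 0 < dS μ s i + dS μ s j) ↔
      (∀ i j : Fin 3, i ≠ j → 0 < s i + s j) :=
    forall₂_congr fun _ _ => forall_congr' fun hij => hμ.dS_add_dS_pos_iff s hij
  rw [posDef_trace_smul_one_sub_diagonal_iff, posDef_trace_smul_one_sub_diagonal_iff]
  exact ⟨hpairs, hpairs⟩

/-- **Equivalence of observability criteria.** Let `S = diag s` with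
`s₁ ≥ s₂ ≥ |s₃| ≥ 0` and let `D = diag (d₁(S), d₂(S), d₃(S))` collect the diagonal
entries of the first moment of `M(S)`. Then `tr(D)·I − D` is positive definite iff
`tr(S)·I − S` is positive definite; equivalently, `dᵢ + dⱼ > 0` for all `i ≠ j` iff
`sᵢ + sⱼ > 0` for all `i ≠ j`. -/
theorem observability_criteria_equiv (μ : Measure M3) (hμ : IsHaarSO3 μ)
    (s : Fin 3 → ℝ) (h1 : s 1 ≤ s 0) (h2 : |s 2| ≤ s 1) :
    (((Matrix.diagonal (fun i => dS μ s i)).trace • (1 : M3)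
          - Matrix.diagonal (fun i => dS μ s i)).PosDef ↔
        ((Matrix.diagonal s).trace • (1 : M3) - Matrix.diagonal s).PosDef) ∧
    ((∀ i j : Fin 3, i ≠ j → 0 < dS μ s i + dS μ s j) ↔
        (∀ i j : Fin 3, i ≠ j → 0 < s i + s j)) :=
  observability_criteria_equiv_general μ hμ s
end
end

section
/- Observability after two inertial direction measurements: let a, x₁, x₂ ∈ ℝ³ with ‖a‖ = ‖x₁‖ = ‖x₂‖ = 1, let δR ∈ SO(3), and let s, κ > 0. Assume δR a and a are linearly independent, and x₁ and x₂ are linearly independent. Then the matrix F₂ = s (δR a) x₁ᵀ + κ a x₂ᵀ has rank exactly 2; consequently, for any proper singular value decomposition F₂ = U D Vᵀ with U, V ∈ SO(3) and D = diag(d₁,d₂,d₃), d₁ ≥ d₂ ≥ |d₃| ≥ 0, one has d₃ = 0 and d₂ > 0, so that tr(D)·I − D is positive definite. -/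
open MeasureTheory Matrix

noncomputable section

/-- **Observability after two inertial direction measurements.** If `δR a` and `a` are
linearly independent and `x₁`, `x₂` are linearly independent, then
`F₂ = s (δR a) x₁ᵀ + κ a x₂ᵀ` has rank exactly two; consequently, in any proper
singular value decomposition `F₂ = U D Vᵀ` one has `d₃ = 0`, `d₂ > 0`, and
`tr(D)·I − D` is positive definite. -/
theorem observable_two_inertial_measurements (a x₁ x₂ : Fin 3 → ℝ)
    (ha : a ⬝ᵥ a = 1) (hx₁ : x₁ ⬝ᵥ x₁ = 1) (hx₂ : x₂ ⬝ᵥ x₂ = 1)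
    (δR : M3) (hδR : δR ∈ SO3) (s κ : ℝ) (hs : 0 < s) (hκ : 0 < κ)
    (hind₁ : LinearIndependent ℝ ![δR.mulVec a, a])
    (hind₂ : LinearIndependent ℝ ![x₁, x₂]) :
    (s • Matrix.vecMulVec (δR.mulVec a) x₁ + κ • Matrix.vecMulVec a x₂).rank = 2 ∧
    ∀ (U V : M3) (d : Fin 3 → ℝ), U ∈ SO3 → V ∈ SO3 →
      d 1 ≤ d 0 → |d 2| ≤ d 1 →
      s • Matrix.vecMulVec (δR.mulVec a) x₁ + κ • Matrix.vecMulVec a x₂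
        = U * Matrix.diagonal d * Vᵀ →
      d 2 = 0 ∧ 0 < d 1 ∧
        ((Matrix.diagonal d).trace • (1 : M3) - Matrix.diagonal d).PosDef := by
  set u := δR.mulVec a with hu
  set F := s • Matrix.vecMulVec u x₁ + κ • Matrix.vecMulVec a x₂ with hF
  -- mulVec formula
  have hmv : ∀ y : Fin 3 → ℝ, F.mulVec y = (s * (x₁ ⬝ᵥ y)) • u + (κ * (x₂ ⬝ᵥ y)) • a := by
    intro y
    funext i
    simp only [hF, Matrix.mulVec, Matrix.vecMulVec, dotProduct, Matrix.add_apply,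
      Matrix.smul_apply, Matrix.of_apply, smul_eq_mul, Pi.add_apply, Pi.smul_apply,
      Finset.mul_sum]
    rw [Finset.sum_mul, Finset.sum_mul, ← Finset.sum_add_distrib]
    apply Finset.sum_congr rfl
    intros
    ring
  set t := x₁ ⬝ᵥ x₂ with ht
  have hcomm : x₂ ⬝ᵥ x₁ = t := dotProduct_comm x₂ x₁
  have ht2 : 1 - t ^ 2 ≠ 0 := by
    intro h
    have hv : (x₂ - t • x₁) ⬝ᵥ (x₂ - t • x₁) = 0 := by
      simp [sub_dotProduct, dotProduct_sub, smul_dotProduct, dotProduct_smul, hx₁, hx₂, hcomm, ht.symm]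
      nlinarith [h]
    have hv0 : x₂ - t • x₁ = 0 := dotProduct_self_eq_zero.mp hv
    have hx2 : x₂ = t • x₁ := by
      have := sub_eq_zero.mp hv0; exact this
    have ht0 : t ≠ 0 := by
      intro h0; rw [h0] at h; norm_num at h
    have : t • x₂ = x₁ := by
      rw [hx2, smul_smul]
      have : t * t = 1 := by nlinarith
      rw [this, one_smul]
    exact (linearIndependent_fin2.mp hind₂).2 t this
  set y₁ : Fin 3 → ℝ := (1 - t ^ 2)⁻¹ • (x₁ - t • x₂) with hy₁
  set y₂ : Fin 3 → ℝ := (1 - t ^ 2)⁻¹ • (x₂ - t • x₁) with hy₂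
  have h11 : x₁ ⬝ᵥ y₁ = 1 := by
    simp [hy₁, dotProduct_smul, dotProduct_sub, hx₁, ht.symm]
    field_simp
  have h21 : x₂ ⬝ᵥ y₁ = 0 := by
    simp [hy₁, dotProduct_smul, dotProduct_sub, hx₂, hcomm]
  have h12 : x₁ ⬝ᵥ y₂ = 0 := by
    simp [hy₂, dotProduct_smul, dotProduct_sub, hx₁, ht.symm]
  have h22 : x₂ ⬝ᵥ y₂ = 1 := by
    simp [hy₂, dotProduct_smul, dotProduct_sub, hx₂, hcomm]
    field_simp
  have hrange : LinearMap.range F.mulVecLin = Submodule.span ℝ (Set.range ![u, a]) := by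
    apply le_antisymm
    · rintro _ ⟨y, rfl⟩
      rw [Matrix.mulVecLin_apply, hmv]
      apply Submodule.add_mem
      · exact Submodule.smul_mem _ _ (Submodule.subset_span ⟨0, rfl⟩)
      · exact Submodule.smul_mem _ _ (Submodule.subset_span ⟨1, rfl⟩)
    · rw [Submodule.span_le]
      rintro _ ⟨i, rfl⟩
      fin_cases i
      · refine ⟨s⁻¹ • y₁, ?_⟩
        rw [Matrix.mulVecLin_apply, Matrix.mulVec_smul, hmv, h11, h21]
        simp [smul_smul, inv_mul_cancel₀ hs.ne']
      · refine ⟨κ⁻¹ • y₂, ?_⟩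
        rw [Matrix.mulVecLin_apply, Matrix.mulVec_smul, hmv, h12, h22]
        simp [smul_smul, inv_mul_cancel₀ hκ.ne']
  have hrank : F.rank = 2 := by
    rw [Matrix.rank, hrange, finrank_span_eq_card hind₁, Fintype.card_fin]
  refine ⟨hrank, ?_⟩
  intro U V d hU hV h01 h12' hdec
  have hUdet : IsUnit U.det := by rw [hU.2]; exact isUnit_one
  have hVdet : IsUnit (Vᵀ).det := by rw [Matrix.det_transpose, hV.2]; exact isUnit_one
  have hrd : (Matrix.diagonal d).rank = 2 := by
    have : (U * Matrix.diagonal d * Vᵀ).rank = (Matrix.diagonal d).rank := by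
      rw [Matrix.rank_mul_eq_left_of_isUnit_det _ _ hVdet,
        Matrix.rank_mul_eq_right_of_isUnit_det _ _ hUdet]
    rw [← this, ← hdec, hrank]
  rw [Matrix.rank_diagonal] at hrd
  have hcard : (Finset.univ.filter (fun i => d i ≠ 0)).card = 2 := by
    rw [← hrd, Fintype.card_subtype]
  have hd2 : d 2 = 0 := by
    by_contra h2
    have hd1 : 0 < d 1 := lt_of_lt_of_le (abs_pos.mpr h2) h12'
    have hd0 : 0 < d 0 := lt_of_lt_of_le hd1 h01
    have : (Finset.univ.filter (fun i => d i ≠ 0)) = Finset.univ := by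
      apply Finset.filter_true_of_mem
      intro i _
      fin_cases i
      · exact hd0.ne'
      · exact hd1.ne'
      · exact h2
    rw [this] at hcard
    simp at hcard
  have hd1 : 0 < d 1 := by
    rcases lt_or_eq_of_le (le_trans (abs_nonneg _) h12') with h | h
    · exact h
    · exfalso
      have hsub : (Finset.univ.filter (fun i => d i ≠ 0)) ⊆ {0} := by
        intro i hi
        simp only [Finset.mem_filter] at hi
        fin_cases i <;> simp_all
      have := Finset.card_le_card hsub
      rw [hcard] at this
      simp at this
  refine ⟨hd2, hd1, ?_⟩
  have hd0 : 0 < d 0 := lt_of_lt_of_le hd1 h01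
  have heq : (Matrix.diagonal d).trace • (1 : M3) - Matrix.diagonal d
      = Matrix.diagonal (fun i => (Matrix.diagonal d).trace - d i) := by
    rw [Matrix.smul_one_eq_diagonal, ← Matrix.diagonal_sub]
  rw [heq]
  rw [Matrix.posDef_diagonal_iff]
  intro i
  have htr : (Matrix.diagonal d).trace = d 0 + d 1 + d 2 := by
    rw [Matrix.trace_diagonal, Fin.sum_univ_three]
  fin_cases i
  · show (0:ℝ) < (Matrix.diagonal d).trace - d 0
    rw [htr]; linarith
  · show (0:ℝ) < (Matrix.diagonal d).trace - d 1
    rw [htr]; linarith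
  · show (0:ℝ) < (Matrix.diagonal d).trace - d 2
    rw [htr]; linarith
end
end
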